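/- For each 0 ≤ i ≤ n let r_i : X × Z^i → ℝ be measurable with |r_i| ≤ R_i for constants R_i ≥ 0, and let γ ∈ (0,1]. Define the value under observation model ρ as V^ρ := ∑_{i=0}^n γ^i E_ρ^{(i)}[r_i]. Then the difference between the values under the original and simplified observation models satisfies |V^{p_Z} − V^{q_Z}| ≤ ∑_{i=1}^n D_i · ∑_{l=i}^n γ^l R_l, i.e. |V^{p_Z} − V^{q_Z}| ≤ ∑_{i=1}^n W_i D_i where W_i := ∑_{l=i}^n γ^l R_l. -/

import Mathlib

/-!
Both values integrate the rewards against the trajectory densities `b ∏ τ_j ∏ ρ(x_j, z_j)`,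
`ρ ∈ {p_Z, q_Z}`. Telescoping the product of observation factors writes the difference of the two
densities at horizon `i` as a sum over `1 ≤ l ≤ i` of densities using `q_Z` before step `l`,
`p_Z − q_Z` at step `l` and `p_Z` after it. Bounding the reward by `R_i`, the steps after `l`
integrate out (every `τ_j` and `p_Z` is normalised) and the observation at step `l` integrates
`|p_Z − q_Z|` to `Δ(x_l)`, leaving exactly `D_l`. Weighting by `γ^i` and exchanging the sums
over `i` and `l` gives the bound.
-/

open MeasureTheory

noncomputable section

/-- The state-dependent total-variation discrepancy
`Δ(x) = ∫ |p_Z(x,z) − q_Z(x,z)| dμ_Z(z)` between two conditional observation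
densities. -/
def TVdisc {X Z : Type*} [MeasurableSpace Z] (μZ : Measure Z)
    (pZ qZ : X → Z → ℝ) (x : X) : ℝ :=
  ∫ z, |pZ x z - qZ x z| ∂μZ

/-- `Eexp μX μZ b τ ρ i hi f` is the expectation
`E_ρ^{(i)}[f] = ∫_{Z^i} ∫_{X^{i+1}} b(x₀) ∏_{j=1}^i τ_j(x_{j-1}, z_{1:j-1}, x_j)
∏_{j=1}^i ρ(x_j, z_j) · f(x_i, z_{1:i})`. -/
def Eexp {X Z : Type*} [MeasurableSpace X] [MeasurableSpace Z]
    (μX : Measure X) (μZ : Measure Z) {n : ℕ}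
    (b : X → ℝ) (τ : (j : Fin n) → X → (Fin j.val → Z) → X → ℝ)
    (ρ : X → Z → ℝ) (i : ℕ) (hi : i ≤ n)
    (f : X → (Fin i → Z) → ℝ) : ℝ :=
  ∫ z : Fin i → Z,
    ∫ x : Fin (i + 1) → X,
      b (x 0) *
        (∏ j : Fin i,
          τ (j.castLE hi) (x j.castSucc) (fun k => z (k.castLE j.isLt.le))
            (x j.succ)) *
        (∏ j : Fin i, ρ (x j.succ) (z j)) *
        f (x (Fin.last i)) z
      ∂(Measure.pi fun _ => μX)
    ∂(Measure.pi fun _ => μZ)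

/-- `Dstep μX μZ b τ pZ qZ l` is the expected stepwise discrepancy
`D_{l+1} = ∫_{Z^l} ∫_{X^{l+2}} b(x₀) ∏_{j=1}^{l+1} τ_j ∏_{k=1}^{l} q_Z(x_k,z_k) ·
Δ(x_{l+1})` (the paper's `D_l` for the 1-based step `l = l.val + 1`). -/
def Dstep {X Z : Type*} [MeasurableSpace X] [MeasurableSpace Z]
    (μX : Measure X) (μZ : Measure Z) {n : ℕ}
    (b : X → ℝ) (τ : (j : Fin n) → X → (Fin j.val → Z) → X → ℝ)
    (pZ qZ : X → Z → ℝ) (l : Fin n) : ℝ :=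
  ∫ z : Fin l.val → Z,
    ∫ x : Fin (l.val + 2) → X,
      b (x 0) *
        (∏ j : Fin (l.val + 1),
          τ (j.castLE l.isLt) (x j.castSucc)
            (fun k => z (k.castLE (Nat.lt_succ_iff.mp j.isLt))) (x j.succ)) *
        (∏ k : Fin l.val, qZ (x k.succ.castSucc) (z k)) *
        TVdisc μZ pZ qZ (x (Fin.last (l.val + 1)))
      ∂(Measure.pi fun _ => μX)
    ∂(Measure.pi fun _ => μZ)

open Finset
open scoped ENNReal

theorem Finset.prod_sub_prod_eq_sum_prod_ite {ι R : Type*} [LinearOrder ι] [CommRing R]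
    (s : Finset ι) (f g : ι → R) :
    ∏ i ∈ s, f i - ∏ i ∈ s, g i =
      ∑ l ∈ s, ∏ i ∈ s, if i < l then g i else if i = l then f i - g i else f i := by
  have h := prod_sub_ordered s f fun i => f i - g i
  simp only [sub_sub_cancel] at h
  rw [h, sub_sub_cancel]
  refine sum_congr rfl fun l hl => ?_
  rw [prod_ite, prod_ite, filter_filter, filter_filter]
  have h1 : {i ∈ s | ¬i < l ∧ i = l} = {l} := by
    ext i; simp only [mem_filter, mem_singleton]; constructor
    · rintro ⟨-, -, rfl⟩; rfl
    · rintro rfl; exact ⟨hl, lt_irrefl _, rfl⟩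
  have h2 : {i ∈ s | ¬i < l ∧ ¬i = l} = {i ∈ s | l < i} :=
    filter_congr fun i _ => by rw [not_lt, lt_iff_le_and_ne, ne_comm]
  rw [h1, h2, prod_singleton]
  ring

theorem Fin.sum_castLE_eq_sum_filter_val_lt {M : Type*} [AddCommMonoid M] {i n : ℕ} (hi : i ≤ n)
    (d : Fin n → M) :
    ∑ l : Fin i, d (l.castLE hi) = ∑ l ∈ univ.filter (fun l : Fin n => l.val < i), d l := by
  refine (sum_map univ (Fin.castLEEmb hi) d).symm.trans (congrArg (Finset.sum · d) ?_)
  ext l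
  simp only [mem_map, mem_univ, true_and, mem_filter, Fin.castLEEmb_apply]
  exact ⟨fun ⟨k, hk⟩ => hk ▸ k.isLt, fun h => ⟨⟨l, h⟩, rfl⟩⟩

theorem Fin.sum_mul_sum_val_lt_comm {R : Type*} [CommSemiring R] {n : ℕ} (a : Fin (n + 1) → R)
    (d : Fin n → R) :
    ∑ i, a i * ∑ l ∈ univ.filter (fun l : Fin n => l.val < i.val), d l =
      ∑ l, (∑ i ∈ univ.filter (fun i : Fin (n + 1) => l.val + 1 ≤ i.val), a i) * d l := by
  simp only [mul_sum, sum_mul]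
  exact sum_comm' fun i l => by simp only [mem_filter, mem_univ, true_and, and_true]; omega

section PiSnoc

variable {α β : Type*} [MeasurableSpace α] [MeasurableSpace β] {μ : Measure α} [SigmaFinite μ]
  {ν : Measure β} [SFinite ν]

theorem measurePreserving_snoc (m : ℕ) :
    MeasurePreserving (fun p : (Fin m → α) × α => (Fin.snoc p.1 p.2 : Fin (m + 1) → α))
      ((Measure.pi fun _ => μ).prod μ) (Measure.pi fun _ => μ) := by
  have h := (measurePreserving_piFinSuccAbove (fun _ : Fin (m + 1) => μ) (Fin.last m)).symm
  convert h.comp Measure.measurePreserving_swap using 1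
  ext p : 1
  simp [MeasurableEquiv.piFinSuccAbove_symm_apply, Fin.insertNthEquiv, Fin.insertNth_last']

theorem lintegral_prod_pi_snoc (m : ℕ) {F : β × (Fin (m + 1) → α) → ℝ≥0∞} (hF : Measurable F) :
    ∫⁻ p, F p ∂ν.prod (Measure.pi fun _ => μ) =
      ∫⁻ p, ∫⁻ a, F (p.1, Fin.snoc p.2 a) ∂μ ∂ν.prod (Measure.pi fun _ => μ) := by
  have h := ((MeasurePreserving.id ν).prod (measurePreserving_snoc (μ := μ) m)).comp
    (measurePreserving_prodAssoc ν (Measure.pi fun _ : Fin m => μ) μ)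
  rw [← h.lintegral_comp hF]
  exact lintegral_prod _ (hF.comp h.measurable).aemeasurable

theorem lintegral_pi_snoc_prod (m : ℕ) {F : (Fin (m + 1) → α) × β → ℝ≥0∞} (hF : Measurable F) :
    ∫⁻ p, F p ∂(Measure.pi fun _ => μ).prod ν =
      ∫⁻ p, ∫⁻ a, F (Fin.snoc p.1 a, p.2) ∂μ ∂(Measure.pi fun _ => μ).prod ν := by
  rw [← lintegral_prod_swap,
    lintegral_prod_pi_snoc m (F := fun p => F p.swap) (hF.comp measurable_swap),
    ← lintegral_prod_swap]
  rfl

end PiSnoc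

theorem lintegral_ofReal_eq_one {α : Type*} [MeasurableSpace α] {μ : Measure α} {f : α → ℝ}
    (hf0 : ∀ a, 0 ≤ f a) (hf : ∫ a, f a ∂μ = 1) : ∫⁻ a, ENNReal.ofReal (f a) ∂μ = 1 := by
  rw [← ofReal_integral_eq_lintegral_ofReal (integrable_of_integral_eq_one hf)
    (Filter.Eventually.of_forall hf0), hf, ENNReal.ofReal_one]

theorem integral_integral_eq_toReal_lintegral {α β : Type*} [MeasurableSpace α]
    [MeasurableSpace β] {μ : Measure α} {ν : Measure β} [SFinite μ] [SFinite ν]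
    {f : α × β → ℝ} (hf : Measurable f) (hf0 : ∀ p, 0 ≤ f p)
    (hfin : ∫⁻ p, ENNReal.ofReal (f p) ∂μ.prod ν ≠ ∞) :
    ∫ a, ∫ b, f (a, b) ∂ν ∂μ = (∫⁻ p, ENNReal.ofReal (f p) ∂μ.prod ν).toReal := by
  have hint := (lintegral_ofReal_ne_top_iff_integrable hf.aestronglyMeasurable
    (Filter.Eventually.of_forall hf0)).1 hfin
  rw [← integral_prod f hint,
    integral_eq_lintegral_of_nonneg_ae (Filter.Eventually.of_forall hf0) hf.aestronglyMeasurable]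

section PathDensity

variable {X Z : Type*} {n : ℕ} (b : X → ℝ) (τ : (j : Fin n) → X → (Fin j.val → Z) → X → ℝ)

/-- `σ j` is the observation factor of step `j + 1`, so that the steps may use different
observation models; `σ = fun _ => ρ` gives the integrand of `Eexp`. -/
def pathDensity (σ : ℕ → X → Z → ℝ) (i : ℕ) (hi : i ≤ n)
    (p : (Fin i → Z) × (Fin (i + 1) → X)) : ℝ :=
  b (p.2 0) *
    (∏ j : Fin i,
      τ (j.castLE hi) (p.2 j.castSucc) (fun k => p.1 (k.castLE j.isLt.le)) (p.2 j.succ)) *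
    ∏ j : Fin i, σ j (p.2 j.succ) (p.1 j)

/-- The density after the transition to `x_{i+1}` but before the observation `z_{i+1}`; with
`σ = fun _ => qZ` and multiplied by `TVdisc` it is the integrand of `Dstep`. -/
def predDensity (σ : ℕ → X → Z → ℝ) (i : ℕ) (hi : i < n)
    (p : (Fin i → Z) × (Fin (i + 2) → X)) : ℝ :=
  b (p.2 0) *
    (∏ j : Fin (i + 1),
      τ (j.castLE hi) (p.2 j.castSucc)
        (fun k => p.1 (k.castLE (Nat.lt_succ_iff.mp j.isLt))) (p.2 j.succ)) *
    ∏ k : Fin i, σ k (p.2 k.succ.castSucc) (p.1 k)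

/-- Observation factors of the `l`-th term in the telescoped difference `∏ pZ − ∏ qZ`. -/
def telescopeFactor (pZ qZ : X → Z → ℝ) (l j : ℕ) : X → Z → ℝ :=
  if j < l then qZ else if j = l then pZ - qZ else pZ

variable {b τ}

theorem pathDensity_nonneg (hb : ∀ x, 0 ≤ b x) (hτ : ∀ j x h x', 0 ≤ τ j x h x')
    {σ : ℕ → X → Z → ℝ} (hσ : ∀ j x z, 0 ≤ σ j x z) (i : ℕ) (hi : i ≤ n) (p) :
    0 ≤ pathDensity b τ σ i hi p :=
  mul_nonneg (mul_nonneg (hb _) (prod_nonneg fun _ _ => hτ _ _ _ _))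
    (prod_nonneg fun _ _ => hσ _ _ _)

theorem predDensity_nonneg (hb : ∀ x, 0 ≤ b x) (hτ : ∀ j x h x', 0 ≤ τ j x h x')
    {σ : ℕ → X → Z → ℝ} (hσ : ∀ j x z, 0 ≤ σ j x z) (i : ℕ) (hi : i < n) (p) :
    0 ≤ predDensity b τ σ i hi p :=
  mul_nonneg (mul_nonneg (hb _) (prod_nonneg fun _ _ => hτ _ _ _ _))
    (prod_nonneg fun _ _ => hσ _ _ _)

theorem abs_pathDensity (hb : ∀ x, 0 ≤ b x) (hτ : ∀ j x h x', 0 ≤ τ j x h x')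
    (σ : ℕ → X → Z → ℝ) (i : ℕ) (hi : i ≤ n) (p) :
    |pathDensity b τ σ i hi p| = pathDensity b τ (fun j x z => |σ j x z|) i hi p := by
  rw [pathDensity, pathDensity, abs_mul, abs_mul, abs_prod, abs_prod, abs_of_nonneg (hb _)]
  simp only [abs_of_nonneg (hτ _ _ _ _)]

theorem pathDensity_mono (hb : ∀ x, 0 ≤ b x) (hτ : ∀ j x h x', 0 ≤ τ j x h x')
    {σ σ' : ℕ → X → Z → ℝ} (hσ : ∀ j x z, 0 ≤ σ j x z) (hσσ' : ∀ j x z, σ j x z ≤ σ' j x z)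
    (i : ℕ) (hi : i ≤ n) (p) :
    pathDensity b τ σ i hi p ≤ pathDensity b τ σ' i hi p :=
  mul_le_mul_of_nonneg_left (prod_le_prod (fun _ _ => hσ _ _ _) fun _ _ => hσσ' _ _ _)
    (mul_nonneg (hb _) (prod_nonneg fun _ _ => hτ _ _ _ _))

theorem predDensity_congr {σ σ' : ℕ → X → Z → ℝ} {i : ℕ} (hσσ' : ∀ j < i, σ j = σ' j)
    (hi : i < n) : predDensity b τ σ i hi = predDensity b τ σ' i hi := by
  ext p
  simp only [predDensity, hσσ' _ (Fin.is_lt _)]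

theorem pathDensity_snoc_obs (σ : ℕ → X → Z → ℝ) (i : ℕ) (hi : i < n) (z : Fin i → Z) (zl : Z)
    (x : Fin (i + 2) → X) :
    pathDensity b τ σ (i + 1) hi (Fin.snoc z zl, x) =
      predDensity b τ σ i hi (z, x) * σ i (x (Fin.last (i + 1))) zl := by
  have hz (j : Fin (i + 1)) : (fun k : Fin (j.castLE hi).val =>
      (Fin.snoc z zl : Fin (i + 1) → Z) (k.castLE j.isLt.le)) =
        fun k => z (k.castLE (Nat.lt_succ_iff.mp j.isLt)) :=
    funext fun k => Fin.snoc_castSucc (α := fun _ => Z) zl z (k.castLE _)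
  simp only [pathDensity, predDensity, hz,
    Fin.prod_univ_castSucc
      (f := fun j : Fin (i + 1) => σ j (x j.succ) ((Fin.snoc z zl : Fin (i + 1) → Z) j))]
  simp only [Fin.snoc_castSucc, Fin.snoc_last, Fin.val_castSucc, Fin.val_last, Fin.succ_last,
    Fin.succ_castSucc]
  ring

theorem predDensity_snoc_state (σ : ℕ → X → Z → ℝ) (i : ℕ) (hi : i < n) (z : Fin i → Z)
    (x : Fin (i + 1) → X) (xl : X) :
    predDensity b τ σ i hi (z, Fin.snoc x xl) =
      pathDensity b τ σ i hi.le (z, x) * τ ⟨i, hi⟩ (x (Fin.last i)) z xl := by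
  rw [predDensity, pathDensity, Fin.prod_univ_castSucc, ← mul_assoc]
  simp only [Fin.snoc_castSucc, Fin.succ_castSucc, Fin.succ_last, Fin.snoc_last,
    Fin.snoc_apply_zero]
  exact mul_right_comm _ _ _

theorem pathDensity_sub_pathDensity (pZ qZ : X → Z → ℝ) (i : ℕ) (hi : i ≤ n) (p) :
    pathDensity b τ (fun _ => pZ) i hi p - pathDensity b τ (fun _ => qZ) i hi p =
      ∑ l : Fin i, pathDensity b τ (telescopeFactor pZ qZ l) i hi p := by
  simp only [pathDensity, ← mul_sub, prod_sub_prod_eq_sum_prod_ite, mul_sum]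
  refine sum_congr rfl fun l _ => congrArg _ (prod_congr rfl fun j _ => ?_)
  simp only [telescopeFactor, Fin.lt_def, Fin.ext_iff]
  split_ifs <;> rfl

theorem abs_telescopeFactor_le {pZ qZ : X → Z → ℝ} (hp0 : ∀ x z, 0 ≤ pZ x z)
    (hq0 : ∀ x z, 0 ≤ qZ x z) (l j : ℕ) (x : X) (z : Z) :
    |telescopeFactor pZ qZ l j x z| ≤ pZ x z + qZ x z := by
  unfold telescopeFactor
  split_ifs
  · rw [abs_of_nonneg (hq0 x z)]; linarith [hp0 x z]
  · exact (abs_sub _ _).trans_eq (by rw [abs_of_nonneg (hp0 x z), abs_of_nonneg (hq0 x z)])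
  · rw [abs_of_nonneg (hp0 x z)]; linarith [hq0 x z]

end PathDensity

theorem ofReal_TVdisc {X Z : Type*} [MeasurableSpace Z] {μZ : Measure Z} {pZ qZ : X → Z → ℝ}
    {x : X} (hp : Integrable (pZ x) μZ) (hq : Integrable (qZ x) μZ) :
    ENNReal.ofReal (TVdisc μZ pZ qZ x) = ∫⁻ z, ENNReal.ofReal |pZ x z - qZ x z| ∂μZ :=
  ofReal_integral_eq_lintegral_ofReal (hp.sub hq).abs (ae_of_all _ fun _ => abs_nonneg _)

section Measurability

variable {X Z : Type*} [MeasurableSpace X] [MeasurableSpace Z] {n : ℕ} {b : X → ℝ}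
  {τ : (j : Fin n) → X → (Fin j.val → Z) → X → ℝ} {μZ : Measure Z} {pZ qZ : X → Z → ℝ}

/-- Observations first, as in the iterated integrals of `Eexp` and `Dstep`. -/
abbrev trajMeasure (μX : Measure X) (μZ : Measure Z) (i m : ℕ) :
    Measure ((Fin i → Z) × (Fin m → X)) :=
  (Measure.pi fun _ => μZ).prod (Measure.pi fun _ => μX)

theorem measurable_pathDensity (hb : Measurable b)
    (hτ : ∀ j, Measurable fun t : X × (Fin j.val → Z) × X => τ j t.1 t.2.1 t.2.2)
    {σ : ℕ → X → Z → ℝ} (hσ : ∀ j, Measurable (Function.uncurry (σ j))) (i : ℕ) (hi : i ≤ n) :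
    Measurable (pathDensity b τ σ i hi) := by
  have hτ' (j : Fin i) : Measurable fun p : (Fin i → Z) × (Fin (i + 1) → X) =>
      τ (j.castLE hi) (p.2 j.castSucc) (fun k => p.1 (k.castLE j.isLt.le)) (p.2 j.succ) :=
    (hτ (j.castLE hi)).comp (f := fun p : (Fin i → Z) × (Fin (i + 1) → X) =>
      ((p.2 j.castSucc, fun k => p.1 (k.castLE j.isLt.le), p.2 j.succ) :
        X × (Fin (j.castLE hi).val → Z) × X)) (by fun_prop)
  have hσ' (j : Fin i) : Measurable fun p : (Fin i → Z) × (Fin (i + 1) → X) =>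
      σ j (p.2 j.succ) (p.1 j) :=
    (hσ j).comp (f := fun p : (Fin i → Z) × (Fin (i + 1) → X) => (p.2 j.succ, p.1 j)) (by fun_prop)
  unfold pathDensity
  fun_prop

theorem measurable_predDensity (hb : Measurable b)
    (hτ : ∀ j, Measurable fun t : X × (Fin j.val → Z) × X => τ j t.1 t.2.1 t.2.2)
    {σ : ℕ → X → Z → ℝ} (hσ : ∀ j, Measurable (Function.uncurry (σ j))) (i : ℕ) (hi : i < n) :
    Measurable (predDensity b τ σ i hi) := by
  have hτ' (j : Fin (i + 1)) : Measurable fun p : (Fin i → Z) × (Fin (i + 2) → X) =>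
      τ (j.castLE hi) (p.2 j.castSucc) (fun k => p.1 (k.castLE (Nat.lt_succ_iff.mp j.isLt)))
        (p.2 j.succ) :=
    (hτ (j.castLE hi)).comp (f := fun p : (Fin i → Z) × (Fin (i + 2) → X) =>
      ((p.2 j.castSucc, fun k => p.1 (k.castLE (Nat.lt_succ_iff.mp j.isLt)), p.2 j.succ) :
        X × (Fin (j.castLE hi).val → Z) × X)) (by fun_prop)
  have hσ' (k : Fin i) : Measurable fun p : (Fin i → Z) × (Fin (i + 2) → X) =>
      σ k (p.2 k.succ.castSucc) (p.1 k) :=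
    (hσ k).comp (f := fun p : (Fin i → Z) × (Fin (i + 2) → X) => (p.2 k.succ.castSucc, p.1 k))
      (by fun_prop)
  unfold predDensity
  fun_prop

theorem measurable_telescopeFactor (hp : Measurable (Function.uncurry pZ))
    (hq : Measurable (Function.uncurry qZ)) (l j : ℕ) :
    Measurable (Function.uncurry (telescopeFactor pZ qZ l j)) := by
  unfold telescopeFactor
  split_ifs
  exacts [hq, hp.sub hq, hp]

theorem measurable_abs_telescopeFactor (hp : Measurable (Function.uncurry pZ))
    (hq : Measurable (Function.uncurry qZ)) (l j : ℕ) :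
    Measurable (Function.uncurry fun x z => |telescopeFactor pZ qZ l j x z|) :=
  (measurable_telescopeFactor hp hq l j).abs

theorem measurable_TVdisc [SigmaFinite μZ] (hp : Measurable (Function.uncurry pZ))
    (hq : Measurable (Function.uncurry qZ)) : Measurable (TVdisc μZ pZ qZ) :=
  ((hp.sub hq).abs.stronglyMeasurable.integral_prod_right (ν := μZ)).measurable

end Measurability

section PathMass

variable {X Z : Type*} [MeasurableSpace X] [MeasurableSpace Z] (μX : Measure X) (μZ : Measure Z)
  {n : ℕ} (b : X → ℝ) (τ : (j : Fin n) → X → (Fin j.val → Z) → X → ℝ)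

def pathMass (σ : ℕ → X → Z → ℝ) (i : ℕ) (hi : i ≤ n) : ℝ≥0∞ :=
  ∫⁻ p, ENNReal.ofReal (pathDensity b τ σ i hi p) ∂trajMeasure μX μZ i (i + 1)

variable {μX μZ b τ} {σ : ℕ → X → Z → ℝ}

theorem integrable_pathDensity_mul (hb : Measurable b) (hb0 : ∀ x, 0 ≤ b x)
    (hτ : ∀ j, Measurable fun t : X × (Fin j.val → Z) × X => τ j t.1 t.2.1 t.2.2)
    (hτ0 : ∀ j x h x', 0 ≤ τ j x h x') (hσ : ∀ j, Measurable (Function.uncurry (σ j))) (i : ℕ)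
    (hi : i ≤ n) (hfin : pathMass μX μZ b τ (fun j x z => |σ j x z|) i hi ≠ ∞)
    {g : (Fin i → Z) × (Fin (i + 1) → X) → ℝ} (hg : Measurable g) {C : ℝ}
    (hgC : ∀ p, |g p| ≤ C) :
    Integrable (fun p => pathDensity b τ σ i hi p * g p) (trajMeasure μX μZ i (i + 1)) := by
  refine Integrable.mul_bdd ⟨(measurable_pathDensity hb hτ hσ i hi).aestronglyMeasurable, ?_⟩
    hg.aestronglyMeasurable (ae_of_all _ hgC)
  simp_rw [hasFiniteIntegral_iff_norm, Real.norm_eq_abs, abs_pathDensity hb0 hτ0]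
  exact hfin.lt_top

theorem abs_integral_pathDensity_mul_le (hb0 : ∀ x, 0 ≤ b x) (hτ0 : ∀ j x h x', 0 ≤ τ j x h x')
    (i : ℕ) (hi : i ≤ n) (hfin : pathMass μX μZ b τ (fun j x z => |σ j x z|) i hi ≠ ∞)
    {g : (Fin i → Z) × (Fin (i + 1) → X) → ℝ} {C : ℝ} (hC : 0 ≤ C) (hgC : ∀ p, |g p| ≤ C) :
    |∫ p, pathDensity b τ σ i hi p * g p ∂trajMeasure μX μZ i (i + 1)| ≤
      C * (pathMass μX μZ b τ (fun j x z => |σ j x z|) i hi).toReal := by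
  have hpt (p) : ENNReal.ofReal ‖pathDensity b τ σ i hi p * g p‖ ≤
      ENNReal.ofReal C * ENNReal.ofReal (pathDensity b τ (fun j x z => |σ j x z|) i hi p) := by
    rw [← ENNReal.ofReal_mul hC, Real.norm_eq_abs, abs_mul, abs_pathDensity hb0 hτ0, mul_comm C]
    exact ENNReal.ofReal_le_ofReal (mul_le_mul_of_nonneg_left (hgC p)
      (pathDensity_nonneg hb0 hτ0 (fun _ _ _ => abs_nonneg _) i hi p))
  rw [pathMass] at hfin ⊢
  rw [← ENNReal.toReal_ofReal hC, ← ENNReal.toReal_mul,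
    ← lintegral_const_mul' _ _ ENNReal.ofReal_ne_top]
  refine (norm_integral_le_lintegral_norm _).trans (ENNReal.toReal_mono ?_ (lintegral_mono hpt))
  rw [lintegral_const_mul' _ _ ENNReal.ofReal_ne_top]
  exact ENNReal.mul_ne_top ENNReal.ofReal_ne_top hfin

variable [SigmaFinite μX] [SigmaFinite μZ]

theorem pathMass_succ (hb : Measurable b) (hb0 : ∀ x, 0 ≤ b x)
    (hτ : ∀ j, Measurable fun t : X × (Fin j.val → Z) × X => τ j t.1 t.2.1 t.2.2)
    (hτ0 : ∀ j x h x', 0 ≤ τ j x h x') (hσ : ∀ j, Measurable (Function.uncurry (σ j)))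
    (hσ0 : ∀ j x z, 0 ≤ σ j x z) (i : ℕ) (hi : i < n) :
    pathMass μX μZ b τ σ (i + 1) hi =
      ∫⁻ p, ENNReal.ofReal (predDensity b τ σ i hi p) *
        ∫⁻ zl, ENNReal.ofReal (σ i (p.2 (Fin.last (i + 1))) zl) ∂μZ
        ∂trajMeasure μX μZ i (i + 2) := by
  rw [pathMass,
    lintegral_pi_snoc_prod i (measurable_pathDensity hb hτ hσ (i + 1) hi).ennreal_ofReal]
  refine lintegral_congr fun p => ?_
  simp_rw [pathDensity_snoc_obs, ENNReal.ofReal_mul (predDensity_nonneg hb0 hτ0 hσ0 i hi _)]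
  exact lintegral_const_mul' _ _ ENNReal.ofReal_ne_top

theorem lintegral_predDensity (hb : Measurable b) (hb0 : ∀ x, 0 ≤ b x)
    (hτ : ∀ j, Measurable fun t : X × (Fin j.val → Z) × X => τ j t.1 t.2.1 t.2.2)
    (hτ0 : ∀ j x h x', 0 ≤ τ j x h x')
    (hτ1 : ∀ j x h, ∫⁻ x', ENNReal.ofReal (τ j x h x') ∂μX = 1)
    (hσ : ∀ j, Measurable (Function.uncurry (σ j))) (hσ0 : ∀ j x z, 0 ≤ σ j x z) (i : ℕ)
    (hi : i < n) :
    ∫⁻ p, ENNReal.ofReal (predDensity b τ σ i hi p) ∂trajMeasure μX μZ i (i + 2) =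
      pathMass μX μZ b τ σ i hi.le := by
  rw [pathMass,
    lintegral_prod_pi_snoc (i + 1) (measurable_predDensity hb hτ hσ i hi).ennreal_ofReal]
  refine lintegral_congr fun p => ?_
  simp_rw [predDensity_snoc_state, ENNReal.ofReal_mul (pathDensity_nonneg hb0 hτ0 hσ0 i hi.le _)]
  rw [lintegral_const_mul' _ _ ENNReal.ofReal_ne_top, hτ1, mul_one]

theorem pathMass_succ_eq_mul (hb : Measurable b) (hb0 : ∀ x, 0 ≤ b x)
    (hτ : ∀ j, Measurable fun t : X × (Fin j.val → Z) × X => τ j t.1 t.2.1 t.2.2)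
    (hτ0 : ∀ j x h x', 0 ≤ τ j x h x')
    (hτ1 : ∀ j x h, ∫⁻ x', ENNReal.ofReal (τ j x h x') ∂μX = 1)
    (hσ : ∀ j, Measurable (Function.uncurry (σ j))) (hσ0 : ∀ j x z, 0 ≤ σ j x z) (i : ℕ)
    (hi : i < n) {c : ℝ≥0∞} (hσc : ∀ x, ∫⁻ z, ENNReal.ofReal (σ i x z) ∂μZ = c) :
    pathMass μX μZ b τ σ (i + 1) hi = c * pathMass μX μZ b τ σ i hi.le := by
  simp_rw [pathMass_succ hb hb0 hτ hτ0 hσ hσ0, hσc,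
    ← lintegral_predDensity hb hb0 hτ hτ0 hτ1 hσ hσ0 i hi]
  rw [lintegral_mul_const _ (measurable_predDensity hb hτ hσ i hi).ennreal_ofReal, mul_comm]

theorem pathMass_const (hb : Measurable b) (hb0 : ∀ x, 0 ≤ b x)
    (hb1 : ∫⁻ x, ENNReal.ofReal (b x) ∂μX = 1)
    (hτ : ∀ j, Measurable fun t : X × (Fin j.val → Z) × X => τ j t.1 t.2.1 t.2.2)
    (hτ0 : ∀ j x h x', 0 ≤ τ j x h x')
    (hτ1 : ∀ j x h, ∫⁻ x', ENNReal.ofReal (τ j x h x') ∂μX = 1)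
    {ρ : X → Z → ℝ} (hρ : Measurable (Function.uncurry ρ)) (hρ0 : ∀ x z, 0 ≤ ρ x z)
    {c : ℝ≥0∞} (hρc : ∀ x, ∫⁻ z, ENNReal.ofReal (ρ x z) ∂μZ = c) (i : ℕ) (hi : i ≤ n) :
    pathMass μX μZ b τ (fun _ => ρ) i hi = c ^ i := by
  induction i with
  | zero =>
    simp only [pathMass, pathDensity, univ_eq_empty, prod_empty, mul_one, pow_zero]
    rw [lintegral_prod_pi_snoc 0
      (F := fun p : (Fin 0 → Z) × (Fin 1 → X) => ENNReal.ofReal (b (p.2 0))) (by fun_prop)]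
    simp [Fin.snoc_zero, hb1, ← Set.univ_prod_univ, Measure.prod_prod]
  | succ i ih =>
    rw [pathMass_succ_eq_mul hb hb0 hτ hτ0 hτ1 (fun _ => hρ) (fun _ => hρ0) i hi hρc, ih,
      pow_succ']

theorem pathMass_eq_of_le (hb : Measurable b) (hb0 : ∀ x, 0 ≤ b x)
    (hτ : ∀ j, Measurable fun t : X × (Fin j.val → Z) × X => τ j t.1 t.2.1 t.2.2)
    (hτ0 : ∀ j x h x', 0 ≤ τ j x h x')
    (hτ1 : ∀ j x h, ∫⁻ x', ENNReal.ofReal (τ j x h x') ∂μX = 1)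
    (hσ : ∀ j, Measurable (Function.uncurry (σ j))) (hσ0 : ∀ j x z, 0 ≤ σ j x z) {k : ℕ}
    (hσ1 : ∀ j, k ≤ j → ∀ x, ∫⁻ z, ENNReal.ofReal (σ j x z) ∂μZ = 1) {i : ℕ} (hki : k ≤ i)
    (hi : i ≤ n) :
    pathMass μX μZ b τ σ i hi = pathMass μX μZ b τ σ k (hki.trans hi) := by
  induction i, hki using Nat.le_induction with
  | base => rfl
  | succ i hki ih =>
    rw [pathMass_succ_eq_mul hb hb0 hτ hτ0 hτ1 hσ hσ0 i hi (hσ1 i hki), one_mul, ih]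

theorem pathMass_ne_top (hb : Measurable b) (hb0 : ∀ x, 0 ≤ b x)
    (hb1 : ∫⁻ x, ENNReal.ofReal (b x) ∂μX = 1)
    (hτ : ∀ j, Measurable fun t : X × (Fin j.val → Z) × X => τ j t.1 t.2.1 t.2.2)
    (hτ0 : ∀ j x h x', 0 ≤ τ j x h x')
    (hτ1 : ∀ j x h, ∫⁻ x', ENNReal.ofReal (τ j x h x') ∂μX = 1)
    {ρ : X → Z → ℝ} (hρ : Measurable (Function.uncurry ρ)) {c : ℝ≥0∞}
    (hρc : ∀ x, ∫⁻ z, ENNReal.ofReal (ρ x z) ∂μZ = c) (hc : c ≠ ∞)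
    (hσ0 : ∀ j x z, 0 ≤ σ j x z) (hσρ : ∀ j x z, σ j x z ≤ ρ x z) (i : ℕ) (hi : i ≤ n) :
    pathMass μX μZ b τ σ i hi ≠ ∞ := by
  refine ne_top_of_le_ne_top ?_ (lintegral_mono fun p => ENNReal.ofReal_le_ofReal
    (pathDensity_mono hb0 hτ0 hσ0 hσρ (σ' := fun _ => ρ) i hi p))
  rw [← pathMass, pathMass_const hb hb0 hb1 hτ hτ0 hτ1 hρ
    (fun x z => (hσ0 0 x z).trans (hσρ 0 x z)) hρc]
  exact ENNReal.pow_ne_top hc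

end PathMass

section StepBound

variable {X Z : Type*} [MeasurableSpace X] [MeasurableSpace Z] {μX : Measure X} {μZ : Measure Z}
  [SigmaFinite μX] [SigmaFinite μZ] {n : ℕ} {b : X → ℝ}
  {τ : (j : Fin n) → X → (Fin j.val → Z) → X → ℝ} {pZ qZ : X → Z → ℝ}

theorem Eexp_eq_integral_pathDensity {ρ : X → Z → ℝ} {i : ℕ} {hi : i ≤ n}
    {f : X → (Fin i → Z) → ℝ}
    (hint : Integrable (fun p => pathDensity b τ (fun _ => ρ) i hi p * f (p.2 (Fin.last i)) p.1)
      (trajMeasure μX μZ i (i + 1))) :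
    Eexp μX μZ b τ ρ i hi f =
      ∫ p, pathDensity b τ (fun _ => ρ) i hi p * f (p.2 (Fin.last i)) p.1
        ∂trajMeasure μX μZ i (i + 1) :=
  (integral_prod _ hint).symm

theorem pathMass_abs_telescopeFactor (hb : Measurable b) (hb0 : ∀ x, 0 ≤ b x)
    (hτ : ∀ j, Measurable fun t : X × (Fin j.val → Z) × X => τ j t.1 t.2.1 t.2.2)
    (hτ0 : ∀ j x h x', 0 ≤ τ j x h x') (hp : Measurable (Function.uncurry pZ))
    (hq : Measurable (Function.uncurry qZ)) (hq0 : ∀ x z, 0 ≤ qZ x z)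
    (hpi : ∀ x, Integrable (pZ x) μZ) (hqi : ∀ x, Integrable (qZ x) μZ) (l : ℕ) (hl : l < n) :
    pathMass μX μZ b τ (fun j x z => |telescopeFactor pZ qZ l j x z|) (l + 1) hl =
      ∫⁻ p, ENNReal.ofReal (predDensity b τ (fun _ => qZ) l hl p *
        TVdisc μZ pZ qZ (p.2 (Fin.last (l + 1)))) ∂trajMeasure μX μZ l (l + 2) := by
  have hpred : predDensity b τ (fun j x z => |telescopeFactor pZ qZ l j x z|) l hl =
      predDensity b τ (fun _ => qZ) l hl :=
    predDensity_congr (fun j hj => funext₂ fun x z => by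
      simp only [telescopeFactor, if_pos hj, abs_of_nonneg (hq0 x z)]) hl
  rw [pathMass_succ hb hb0 hτ hτ0 (measurable_abs_telescopeFactor hp hq l)
    (fun _ _ _ => abs_nonneg _) l hl, hpred]
  refine lintegral_congr fun p => ?_
  simp only [telescopeFactor, lt_irrefl, if_false, if_true, Pi.sub_apply]
  rw [← ofReal_TVdisc (hpi _) (hqi _),
    ENNReal.ofReal_mul (predDensity_nonneg hb0 hτ0 (fun _ => hq0) l hl _)]

theorem Dstep_eq_toReal_pathMass (hb : Measurable b) (hb0 : ∀ x, 0 ≤ b x)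
    (hτ : ∀ j, Measurable fun t : X × (Fin j.val → Z) × X => τ j t.1 t.2.1 t.2.2)
    (hτ0 : ∀ j x h x', 0 ≤ τ j x h x') (hp : Measurable (Function.uncurry pZ))
    (hq : Measurable (Function.uncurry qZ)) (hq0 : ∀ x z, 0 ≤ qZ x z)
    (hpi : ∀ x, Integrable (pZ x) μZ) (hqi : ∀ x, Integrable (qZ x) μZ) (l : Fin n)
    (hfin : pathMass μX μZ b τ (fun j x z => |telescopeFactor pZ qZ l j x z|) (l + 1) l.isLt
      ≠ ∞) :
    Dstep μX μZ b τ pZ qZ l = (pathMass μX μZ b τ (fun j x z => |telescopeFactor pZ qZ l j x z|)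
      (l + 1) l.isLt).toReal := by
  rw [pathMass_abs_telescopeFactor hb hb0 hτ hτ0 hp hq hq0 hpi hqi] at hfin ⊢
  exact integral_integral_eq_toReal_lintegral
    ((measurable_predDensity hb hτ (fun _ => hq) l l.isLt).mul
      ((measurable_TVdisc hp hq).comp (by fun_prop)))
    (fun p => mul_nonneg (predDensity_nonneg hb0 hτ0 (fun _ => hq0) l l.isLt p)
      (integral_nonneg fun _ => abs_nonneg _)) hfin

/-- Dominated by the path mass `2 ^ i` of the observation factor `pZ + qZ`. -/
theorem pathMass_abs_ne_top (hb : Measurable b) (hb0 : ∀ x, 0 ≤ b x)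
    (hb1 : ∫⁻ x, ENNReal.ofReal (b x) ∂μX = 1)
    (hτ : ∀ j, Measurable fun t : X × (Fin j.val → Z) × X => τ j t.1 t.2.1 t.2.2)
    (hτ0 : ∀ j x h x', 0 ≤ τ j x h x')
    (hτ1 : ∀ j x h, ∫⁻ x', ENNReal.ofReal (τ j x h x') ∂μX = 1)
    (hp : Measurable (Function.uncurry pZ)) (hq : Measurable (Function.uncurry qZ))
    (hp0 : ∀ x z, 0 ≤ pZ x z) (hq0 : ∀ x z, 0 ≤ qZ x z)
    (hp1 : ∀ x, ∫ z, pZ x z ∂μZ = 1) (hq1 : ∀ x, ∫ z, qZ x z ∂μZ = 1)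
    {σ : ℕ → X → Z → ℝ} (hσ : ∀ j x z, |σ j x z| ≤ pZ x z + qZ x z) (i : ℕ) (hi : i ≤ n) :
    pathMass μX μZ b τ (fun j x z => |σ j x z|) i hi ≠ ∞ := by
  have hpq x : ∫⁻ z, ENNReal.ofReal (pZ x z + qZ x z) ∂μZ = 2 := by
    have hpi := integrable_of_integral_eq_one (hp1 x)
    have hqi := integrable_of_integral_eq_one (hq1 x)
    rw [← ofReal_integral_eq_lintegral_ofReal (f := fun z => pZ x z + qZ x z) (hpi.add hqi)
      (ae_of_all _ fun z => add_nonneg (hp0 x z) (hq0 x z)), integral_add hpi hqi, hp1, hq1]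
    norm_num
  exact pathMass_ne_top hb hb0 hb1 hτ hτ0 hτ1 (ρ := fun x z => pZ x z + qZ x z) (hp.add hq) hpq
    (by norm_num) (fun _ _ _ => abs_nonneg _) hσ i hi

theorem toReal_pathMass_abs_telescopeFactor (hb : Measurable b) (hb0 : ∀ x, 0 ≤ b x)
    (hb1 : ∫⁻ x, ENNReal.ofReal (b x) ∂μX = 1)
    (hτ : ∀ j, Measurable fun t : X × (Fin j.val → Z) × X => τ j t.1 t.2.1 t.2.2)
    (hτ0 : ∀ j x h x', 0 ≤ τ j x h x')
    (hτ1 : ∀ j x h, ∫⁻ x', ENNReal.ofReal (τ j x h x') ∂μX = 1)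
    (hp : Measurable (Function.uncurry pZ)) (hq : Measurable (Function.uncurry qZ))
    (hp0 : ∀ x z, 0 ≤ pZ x z) (hq0 : ∀ x z, 0 ≤ qZ x z)
    (hp1 : ∀ x, ∫ z, pZ x z ∂μZ = 1) (hq1 : ∀ x, ∫ z, qZ x z ∂μZ = 1) {l i : ℕ} (hli : l < i)
    (hi : i ≤ n) :
    (pathMass μX μZ b τ (fun j x z => |telescopeFactor pZ qZ l j x z|) i hi).toReal =
      Dstep μX μZ b τ pZ qZ ⟨l, hli.trans_le hi⟩ := by
  have hσ1 (j : ℕ) (hj : l + 1 ≤ j) (x : X) :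
      ∫⁻ z, ENNReal.ofReal |telescopeFactor pZ qZ l j x z| ∂μZ = 1 := by
    simp only [telescopeFactor, if_neg (show ¬j < l by omega), if_neg (show j ≠ l by omega),
      abs_of_nonneg (hp0 x _)]
    exact lintegral_ofReal_eq_one (hp0 x) (hp1 x)
  rw [pathMass_eq_of_le hb hb0 hτ hτ0 hτ1 (measurable_abs_telescopeFactor hp hq l)
      (fun _ _ _ => abs_nonneg _) hσ1 hli hi,
    Dstep_eq_toReal_pathMass hb hb0 hτ hτ0 hp hq hq0
      (fun x => integrable_of_integral_eq_one (hp1 x))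
      (fun x => integrable_of_integral_eq_one (hq1 x)) ⟨l, hli.trans_le hi⟩
      (pathMass_abs_ne_top hb hb0 hb1 hτ hτ0 hτ1 hp hq hp0 hq0 hp1 hq1
        (abs_telescopeFactor_le hp0 hq0 l) _ _)]

theorem abs_Eexp_sub_Eexp_le (hb : Measurable b) (hb0 : ∀ x, 0 ≤ b x)
    (hb1 : ∫ x, b x ∂μX = 1)
    (hτ : ∀ j, Measurable fun t : X × (Fin j.val → Z) × X => τ j t.1 t.2.1 t.2.2)
    (hτ0 : ∀ j x h x', 0 ≤ τ j x h x') (hτ1 : ∀ j x h, ∫ x', τ j x h x' ∂μX = 1)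
    (hp : Measurable (Function.uncurry pZ)) (hq : Measurable (Function.uncurry qZ))
    (hp0 : ∀ x z, 0 ≤ pZ x z) (hq0 : ∀ x z, 0 ≤ qZ x z)
    (hp1 : ∀ x, ∫ z, pZ x z ∂μZ = 1) (hq1 : ∀ x, ∫ z, qZ x z ∂μZ = 1) (i : ℕ) (hi : i ≤ n)
    {f : X → (Fin i → Z) → ℝ} (hf : Measurable fun t : X × (Fin i → Z) => f t.1 t.2) {C : ℝ}
    (hC : 0 ≤ C) (hfC : ∀ x z, |f x z| ≤ C) :
    |Eexp μX μZ b τ pZ i hi f - Eexp μX μZ b τ qZ i hi f| ≤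
      C * ∑ l ∈ univ.filter (fun l : Fin n => l.val < i), Dstep μX μZ b τ pZ qZ l := by
  have hb1' := lintegral_ofReal_eq_one hb0 hb1
  have hτ1' j x h := lintegral_ofReal_eq_one (hτ0 j x h) (hτ1 j x h)
  have hfin {σ : ℕ → X → Z → ℝ} (hσ : ∀ j x z, |σ j x z| ≤ pZ x z + qZ x z) :=
    pathMass_abs_ne_top hb hb0 hb1' hτ hτ0 hτ1' hp hq hp0 hq0 hp1 hq1 hσ i hi
  have hg : Measurable fun p : (Fin i → Z) × (Fin (i + 1) → X) => f (p.2 (Fin.last i)) p.1 :=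
    hf.comp (f := fun p : (Fin i → Z) × (Fin (i + 1) → X) => (p.2 (Fin.last i), p.1))
      (by fun_prop)
  have hint {σ : ℕ → X → Z → ℝ} (hσ : ∀ j, Measurable (Function.uncurry (σ j)))
      (hσpq : ∀ j x z, |σ j x z| ≤ pZ x z + qZ x z) :=
    integrable_pathDensity_mul hb hb0 hτ hτ0 hσ i hi (hfin hσpq) hg fun p => hfC _ _
  have hintp := hint (fun _ => hp) fun _ x z => by
    rw [abs_of_nonneg (hp0 x z)]; linarith [hq0 x z]
  have hintq := hint (fun _ => hq) fun _ x z => by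
    rw [abs_of_nonneg (hq0 x z)]; linarith [hp0 x z]
  rw [Eexp_eq_integral_pathDensity hintp, Eexp_eq_integral_pathDensity hintq,
    ← integral_sub hintp hintq]
  simp_rw [← sub_mul, pathDensity_sub_pathDensity, sum_mul]
  rw [integral_finsetSum _ fun (l : Fin i) _ => hint (measurable_telescopeFactor hp hq l)
      (abs_telescopeFactor_le hp0 hq0 l),
    ← Fin.sum_castLE_eq_sum_filter_val_lt hi, mul_sum]
  refine (abs_sum_le_sum_abs _ _).trans (sum_le_sum fun l _ => ?_)
  refine (abs_integral_pathDensity_mul_le hb0 hτ0 i hi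
    (hfin (abs_telescopeFactor_le hp0 hq0 l)) hC fun p => hfC _ _).trans_eq ?_
  rw [toReal_pathMass_abs_telescopeFactor hb hb0 hb1' hτ hτ0 hτ1' hp hq hp0 hq0 hp1 hq1 l.isLt hi]
  rfl

end StepBound

theorem value_diff_le_weighted_sum_discrepancy_general
    {X Z : Type*} [MeasurableSpace X] [MeasurableSpace Z]
    (μX : Measure X) (μZ : Measure Z) [SigmaFinite μX] [SigmaFinite μZ]
    (n : ℕ)
    (b : X → ℝ) (hb_meas : Measurable b) (hb_nonneg : ∀ x, 0 ≤ b x)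
    (hb_norm : ∫ x, b x ∂μX = 1)
    (τ : (j : Fin n) → X → (Fin j.val → Z) → X → ℝ)
    (hτ_meas : ∀ j, Measurable fun t : X × (Fin j.val → Z) × X => τ j t.1 t.2.1 t.2.2)
    (hτ_nonneg : ∀ j x h x', 0 ≤ τ j x h x')
    (hτ_norm : ∀ j x h, ∫ x', τ j x h x' ∂μX = 1)
    (pZ qZ : X → Z → ℝ)
    (hp_meas : Measurable (Function.uncurry pZ))
    (hq_meas : Measurable (Function.uncurry qZ))
    (hp_nonneg : ∀ x z, 0 ≤ pZ x z) (hq_nonneg : ∀ x z, 0 ≤ qZ x z)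
    (hp_norm : ∀ x, ∫ z, pZ x z ∂μZ = 1) (hq_norm : ∀ x, ∫ z, qZ x z ∂μZ = 1)
    (γ : ℝ) (hγ0 : 0 < γ)
    (r : (i : Fin (n + 1)) → X → (Fin i.val → Z) → ℝ)
    (hr_meas : ∀ i, Measurable fun t : X × (Fin i.val → Z) => r i t.1 t.2)
    (R : Fin (n + 1) → ℝ) (hR : ∀ i, 0 ≤ R i)
    (hr_bdd : ∀ i x z, |r i x z| ≤ R i) :
    |(∑ i : Fin (n + 1),
        γ ^ i.val *
          Eexp μX μZ b τ pZ i.val (Nat.lt_succ_iff.mp i.isLt) (r i)) -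
      ∑ i : Fin (n + 1),
        γ ^ i.val *
          Eexp μX μZ b τ qZ i.val (Nat.lt_succ_iff.mp i.isLt) (r i)|
      ≤ ∑ i : Fin n,
          (∑ l ∈ Finset.univ.filter fun l : Fin (n + 1) => i.val + 1 ≤ l.val,
              γ ^ l.val * R l) *
            Dstep μX μZ b τ pZ qZ i := by
  have hstep (i : Fin (n + 1)) := abs_Eexp_sub_Eexp_le hb_meas hb_nonneg hb_norm hτ_meas
    hτ_nonneg hτ_norm hp_meas hq_meas hp_nonneg hq_nonneg hp_norm hq_norm i.val
    (Nat.lt_succ_iff.mp i.isLt) (hr_meas i) (hR i) (hr_bdd i)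
  rw [← sum_sub_distrib, ← Fin.sum_mul_sum_val_lt_comm]
  refine (abs_sum_le_sum_abs _ _).trans (sum_le_sum fun i _ => ?_)
  rw [← mul_sub, abs_mul, abs_of_pos (pow_pos hγ0 _), mul_assoc]
  exact mul_le_mul_of_nonneg_left (hstep i) (pow_nonneg hγ0.le _)

/-- Corollary 1 of the paper (the value-function bound): the difference between
the values `V^ρ = ∑_{i=0}^n γ^i E_ρ^{(i)}[r_i]` under the original and
simplified observation models is bounded by `∑_{i=1}^n W_i D_i`, where
`W_i = ∑_{l=i}^n γ^l R_l`. -/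
theorem value_diff_le_weighted_sum_discrepancy
    {X Z : Type*} [MeasurableSpace X] [MeasurableSpace Z]
    (μX : Measure X) (μZ : Measure Z) [SigmaFinite μX] [SigmaFinite μZ]
    (n : ℕ)
    (b : X → ℝ) (hb_meas : Measurable b) (hb_nonneg : ∀ x, 0 ≤ b x)
    (hb_norm : ∫ x, b x ∂μX = 1)
    (τ : (j : Fin n) → X → (Fin j.val → Z) → X → ℝ)
    (hτ_meas : ∀ j, Measurable fun t : X × (Fin j.val → Z) × X => τ j t.1 t.2.1 t.2.2)
    (hτ_nonneg : ∀ j x h x', 0 ≤ τ j x h x')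
    (hτ_norm : ∀ j x h, ∫ x', τ j x h x' ∂μX = 1)
    (pZ qZ : X → Z → ℝ)
    (hp_meas : Measurable (Function.uncurry pZ))
    (hq_meas : Measurable (Function.uncurry qZ))
    (hp_nonneg : ∀ x z, 0 ≤ pZ x z) (hq_nonneg : ∀ x z, 0 ≤ qZ x z)
    (hp_norm : ∀ x, ∫ z, pZ x z ∂μZ = 1) (hq_norm : ∀ x, ∫ z, qZ x z ∂μZ = 1)
    (γ : ℝ) (hγ0 : 0 < γ) (hγ1 : γ ≤ 1)
    (r : (i : Fin (n + 1)) → X → (Fin i.val → Z) → ℝ)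
    (hr_meas : ∀ i, Measurable fun t : X × (Fin i.val → Z) => r i t.1 t.2)
    (R : Fin (n + 1) → ℝ) (hR : ∀ i, 0 ≤ R i)
    (hr_bdd : ∀ i x z, |r i x z| ≤ R i) :
    |(∑ i : Fin (n + 1),
        γ ^ i.val *
          Eexp μX μZ b τ pZ i.val (Nat.lt_succ_iff.mp i.isLt) (r i)) -
      ∑ i : Fin (n + 1),
        γ ^ i.val *
          Eexp μX μZ b τ qZ i.val (Nat.lt_succ_iff.mp i.isLt) (r i)|
      ≤ ∑ i : Fin n,
          (∑ l ∈ Finset.univ.filter fun l : Fin (n + 1) => i.val + 1 ≤ l.val,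
              γ ^ l.val * R l) *
            Dstep μX μZ b τ pZ qZ i :=
  value_diff_le_weighted_sum_discrepancy_general μX μZ n b hb_meas hb_nonneg hb_norm τ hτ_meas
    hτ_nonneg hτ_norm pZ qZ hp_meas hq_meas hp_nonneg hq_nonneg hp_norm hq_norm γ hγ0 r hr_meas R hR
    hr_bdd

end
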